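/- For every α > 0, (2/(α√π)) ∫₀¹ erf(α√(1-s²)) ds = e^{-α²/2} (I₀(α²/2) + I₁(α²/2)); that is, the two expressions for c(α) coincide. -/

import Mathlib

open Real Filter

/-- Modified Bessel function of the first kind (integer order), via its power series. -/
noncomputable def besselI (ν : ℕ) (x : ℝ) : ℝ :=
  ∑' k : ℕ, (x/2)^(2*k+ν) / ((Nat.factorial k : ℝ) * (Nat.factorial (k+ν) : ℝ))

/-- The odd double factorial (2k-1)!! = (2k)!/(2^k k!), with (-1)!! = 1. -/
noncomputable def oddDF (k : ℕ) : ℝ := (Nat.factorial (2*k) : ℝ) / (2^k * (Nat.factorial k : ℝ))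

open MeasureTheory

/-- The error function. -/
noncomputable def erf (x : ℝ) : ℝ := (2/Real.sqrt Real.pi) * ∫ t in (0:ℝ)..x, Real.exp (-t^2)

open intervalIntegral

/-- Swap a tsum and an interval integral, given a uniform summable bound. -/
lemma tsum_intervalIntegral_swap {a b : ℝ} (hab : a ≤ b) (F : ℕ → ℝ → ℝ) (c : ℕ → ℝ)
    (hF : ∀ n, Continuous (F n))
    (hbd : ∀ n, ∀ t ∈ Set.Icc a b, |F n t| ≤ c n)
    (hc : Summable c) :
    ∫ t in a..b, (∑' n, F n t) = ∑' n, ∫ t in a..b, F n t := by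
  rw [intervalIntegral.integral_of_le hab]
  have hint : ∀ n, Integrable (F n) (volume.restrict (Set.Ioc a b)) := fun n =>
    (hF n).integrableOn_Ioc
  have hbd' : ∀ n, ∫ t in Set.Ioc a b, ‖F n t‖ ≤ c n * (b - a) := by
    intro n
    have h1 : ∫ t in Set.Ioc a b, ‖F n t‖ ≤ ∫ _t in Set.Ioc a b, c n := by
      refine setIntegral_mono_on (hint n).norm (integrableOn_const ?_)
        measurableSet_Ioc (fun t ht => ?_)
      · rw [Real.volume_Ioc]; exact ENNReal.ofReal_ne_top
      · rw [Real.norm_eq_abs]; exact hbd n t (Set.Ioc_subset_Icc_self ht)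
    calc ∫ t in Set.Ioc a b, ‖F n t‖ ≤ ∫ _t in Set.Ioc a b, c n := h1
    _ = c n * (b - a) := by
        rw [setIntegral_const, Real.volume_real_Ioc_of_le hab, smul_eq_mul,
          mul_comm]
  have hsum : Summable fun n => ∫ t in Set.Ioc a b, ‖F n t‖ :=
    Summable.of_nonneg_of_le (fun n => integral_nonneg (fun t => norm_nonneg _)) hbd'
      (hc.mul_right (b - a))
  have := MeasureTheory.integral_tsum_of_summable_integral_norm hint hsum
  rw [← this]
  congr 1
  ext n
  rw [intervalIntegral.integral_of_le hab]

-- recursion for sin over [0, π/2]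
lemma sin_rec (n : ℕ) : ∫ φ in (0:ℝ)..(π/2), sin φ ^ (n + 2)
    = (n + 1) / (n + 2) * ∫ φ in (0:ℝ)..(π/2), sin φ ^ n := by
  rw [integral_sin_pow n]
  simp [Real.cos_pi_div_two, Real.sin_zero]

lemma cos_rec (n : ℕ) : ∫ φ in (0:ℝ)..(π/2), cos φ ^ (n + 2)
    = (n + 1) / (n + 2) * ∫ φ in (0:ℝ)..(π/2), cos φ ^ n := by
  rw [integral_cos_pow n]
  simp [Real.cos_pi_div_two, Real.sin_zero]

lemma cos_eq_sin_pow (n : ℕ) : ∫ φ in (0:ℝ)..(π/2), cos φ ^ n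
    = ∫ φ in (0:ℝ)..(π/2), sin φ ^ n := by
  have h := intervalIntegral.integral_comp_sub_left (a := (0:ℝ)) (b := π/2)
    (fun y => Real.sin y ^ n) (π/2)
  simp only [sub_zero, sub_self] at h
  rw [← h]
  congr 1
  ext x
  rw [Real.sin_pi_div_two_sub]

-- cosine recursion over [0, π]
lemma cospi_rec (n : ℕ) : ∫ θ in (0:ℝ)..π, cos θ ^ (n + 2)
    = (n + 1) / (n + 2) * ∫ θ in (0:ℝ)..π, cos θ ^ n := by
  rw [integral_cos_pow n]
  simp [Real.sin_pi, Real.sin_zero]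

lemma cospi_even (k : ℕ) : ∫ θ in (0:ℝ)..π, cos θ ^ (2 * k)
    = π * (Nat.factorial (2 * k)) / (4 ^ k * (Nat.factorial k : ℝ) ^ 2) := by
  induction k with
  | zero => simp
  | succ k ih =>
    have h2 : 2 * (k + 1) = 2 * k + 2 := by ring
    rw [h2, cospi_rec, ih]
    have hk : (Nat.factorial k : ℝ) ≠ 0 := Nat.cast_ne_zero.2 (Nat.factorial_ne_zero k)
    have h4 : (4 : ℝ) ^ k ≠ 0 := by positivity
    have hfact : (Nat.factorial (2 * k + 2) : ℝ)
        = (2 * k + 2) * ((2 * k + 1) * Nat.factorial (2 * k)) := by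
      push_cast [show 2 * k + 2 = (2 * k + 1) + 1 from rfl, Nat.factorial_succ]
      ring
    have hfact2 : (Nat.factorial (k + 1) : ℝ) = (k + 1) * Nat.factorial k := by
      push_cast [Nat.factorial_succ]; ring
    rw [hfact, hfact2]
    field_simp
    push_cast
    ring

lemma cospi_odd (k : ℕ) : ∫ θ in (0:ℝ)..π, cos θ ^ (2 * k + 1) = 0 := by
  induction k with
  | zero => simp
  | succ k ih =>
    have h2 : 2 * (k + 1) + 1 = (2 * k + 1) + 2 := by ring
    rw [h2, cospi_rec, ih, mul_zero]


lemma real_exp_tsum (y : ℝ) : Real.exp y = ∑' n : ℕ, y ^ n / (Nat.factorial n) := by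
  rw [Real.exp_eq_exp_ℝ, NormedSpace.exp_eq_tsum_div]

lemma sqrt_sub_continuous (k : ℕ) :
    Continuous (fun u : ℝ => (1 - u^2)^k * Real.sqrt (1 - u^2)) := by
  fun_prop

lemma subst_sqrt (k : ℕ) : ∫ s in (0:ℝ)..1, (1 - s^2)^k * Real.sqrt (1 - s^2)
    = ∫ φ in (0:ℝ)..(π/2), cos φ ^ (2 * k + 2) := by
  have h := intervalIntegral.integral_comp_smul_deriv (a := (0:ℝ)) (b := π/2)
    (f := Real.sin) (f' := Real.cos)
    (g := fun u : ℝ => (1 - u^2)^k * Real.sqrt (1 - u^2))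
    (fun x _ => Real.hasDerivAt_sin x) Real.continuous_cos.continuousOn
    (sqrt_sub_continuous k)
  rw [Real.sin_zero, Real.sin_pi_div_two] at h
  rw [← h]
  apply intervalIntegral.integral_congr
  intro φ hφ
  rw [Set.uIcc_of_le (by positivity : (0:ℝ) ≤ π/2)] at hφ
  have hcos : 0 ≤ Real.cos φ := Real.cos_nonneg_of_mem_Icc
    ⟨by linarith [hφ.1, Real.pi_pos], hφ.2⟩
  have h1 : 1 - Real.sin φ ^ 2 = Real.cos φ ^ 2 := (Real.cos_sq' φ).symm
  simp only [Function.comp, smul_eq_mul]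
  rw [h1, Real.sqrt_sq hcos, ← pow_mul]
  ring

lemma key_identity (k : ℕ) : ∫ s in (0:ℝ)..1, (1 - s^2)^k * Real.sqrt (1 - s^2)
    = (2 * k + 1) * ∫ φ in (0:ℝ)..(π/2), sin φ ^ (2 * k) * cos φ ^ 2 := by
  have hsplit : ∫ φ in (0:ℝ)..(π/2), sin φ ^ (2 * k) * cos φ ^ 2
      = (∫ φ in (0:ℝ)..(π/2), sin φ ^ (2 * k))
        - ∫ φ in (0:ℝ)..(π/2), sin φ ^ (2 * k + 2) := by
    rw [← intervalIntegral.integral_sub (f := fun φ => sin φ ^ (2 * k)) (g := fun φ => sin φ ^ (2 * k + 2))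
      ((Real.continuous_sin.pow _).intervalIntegrable 0 (π/2))
      ((Real.continuous_sin.pow _).intervalIntegrable 0 (π/2))]
    apply intervalIntegral.integral_congr
    intro φ _
    have h1 : Real.cos φ ^ 2 = 1 - Real.sin φ ^ 2 := Real.cos_sq' φ
    simp only []
    rw [h1]
    ring
  rw [subst_sqrt, hsplit]
  have h1 : ∫ φ in (0:ℝ)..(π/2), cos φ ^ (2 * k + 2)
      = ((2*k:ℝ) + 1) / ((2*k:ℝ) + 2) * ∫ φ in (0:ℝ)..(π/2), sin φ ^ (2 * k) := by
    rw [cos_eq_sin_pow]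
    have := sin_rec (2 * k)
    push_cast at this ⊢
    linarith [this]
  have h2 : ∫ φ in (0:ℝ)..(π/2), sin φ ^ (2 * k + 2)
      = ((2*k:ℝ) + 1) / ((2*k:ℝ) + 2) * ∫ φ in (0:ℝ)..(π/2), sin φ ^ (2 * k) := by
    have := sin_rec (2 * k)
    push_cast at this ⊢
    linarith [this]
  rw [h1, h2]
  have hne : ((2*k:ℝ) + 2) ≠ 0 := by positivity
  field_simp
  ring_nf
  try left; trivial

lemma inj_even : Function.Injective (fun k : ℕ => 2 * k) := by intro a b h; simp only [] at h; omega
lemma inj_odd : Function.Injective (fun k : ℕ => 2 * k + 1) := by intro a b h; simp only [] at h; omega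


section rep
variable (x : ℝ)

set_option maxHeartbeats 4000000 in
lemma besselI_rep (m : ℕ) (hm : m ≤ 1) :
    ∫ θ in (0:ℝ)..π, cos θ ^ m * Real.exp (x * cos θ) = π * besselI m x := by
  set F : ℕ → ℝ → ℝ := fun n θ => x ^ n / (Nat.factorial n) * cos θ ^ (n + m) with hF
  have hpt : ∀ θ : ℝ, cos θ ^ m * Real.exp (x * cos θ) = ∑' n, F n θ := by
    intro θ
    rw [real_exp_tsum, ← tsum_mul_left]
    congr 1
    ext n
    rw [hF]
    simp only [mul_pow, pow_add]
    ring
  have hswap : ∫ θ in (0:ℝ)..π, (∑' n, F n θ) = ∑' n, ∫ θ in (0:ℝ)..π, F n θ := by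
    apply tsum_intervalIntegral_swap Real.pi_pos.le F (fun n => |x| ^ n / (Nat.factorial n))
    · intro n; exact (continuous_const.mul (Real.continuous_cos.pow _))
    · intro n t _
      rw [hF]
      simp only [abs_mul, abs_div, abs_pow, Nat.abs_cast]
      have h1 : |Real.cos t| ^ (n + m) ≤ 1 :=
        pow_le_one₀ (abs_nonneg _) (Real.abs_cos_le_one t)
      calc |x| ^ n / (Nat.factorial n) * |Real.cos t| ^ (n + m)
          ≤ |x| ^ n / (Nat.factorial n) * 1 := by
            apply mul_le_mul_of_nonneg_left h1 (by positivity)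
        _ = |x| ^ n / (Nat.factorial n) := mul_one _
    · exact Real.summable_pow_div_factorial |x|
  have hval : ∀ n, ∫ θ in (0:ℝ)..π, F n θ
      = x ^ n / (Nat.factorial n) * ∫ θ in (0:ℝ)..π, cos θ ^ (n + m) := by
    intro n
    rw [hF]
    exact intervalIntegral.integral_const_mul _ _
  have hsummable : Summable (fun n => ∫ θ in (0:ℝ)..π, F n θ) := by
    apply Summable.of_norm_bounded (g := fun n => |x| ^ n / (Nat.factorial n) * π)
      ((Real.summable_pow_div_factorial |x|).mul_right π)
    intro n
    have := intervalIntegral.norm_integral_le_of_norm_le_const (C := |x| ^ n / (Nat.factorial n))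
      (f := F n) (a := 0) (b := π) ?_
    · simpa [abs_of_nonneg Real.pi_pos.le] using this
    · intro t ht
      rw [Set.uIoc_of_le Real.pi_pos.le] at ht
      rw [hF, Real.norm_eq_abs]
      simp only [abs_mul, abs_div, abs_pow, Nat.abs_cast]
      have h1 : |Real.cos t| ^ (n + m) ≤ 1 :=
        pow_le_one₀ (abs_nonneg _) (Real.abs_cos_le_one t)
      calc |x| ^ n / (Nat.factorial n) * |Real.cos t| ^ (n + m)
          ≤ |x| ^ n / (Nat.factorial n) * 1 := by
            apply mul_le_mul_of_nonneg_left h1 (by positivity)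
        _ = |x| ^ n / (Nat.factorial n) := mul_one _
  rw [intervalIntegral.integral_congr (fun θ _ => hpt θ), hswap,
    ← tsum_even_add_odd (hsummable.comp_injective inj_even)
      (hsummable.comp_injective inj_odd)]
  rcases Nat.le_one_iff_eq_zero_or_eq_one.mp hm with rfl | rfl
  · -- m = 0
    have hodd : ∀ k : ℕ, ∫ θ in (0:ℝ)..π, F (2 * k + 1) θ = 0 := by
      intro k
      rw [hval, show 2 * k + 1 + 0 = 2 * k + 1 from rfl, cospi_odd, mul_zero]
    have heven : ∀ k : ℕ, ∫ θ in (0:ℝ)..π, F (2 * k) θ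
        = π * ((x/2)^(2*k+0) / ((Nat.factorial k : ℝ) * (Nat.factorial (k+0) : ℝ))) := by
      intro k
      rw [hval, show 2 * k + 0 = 2 * k from rfl, cospi_even]
      have h1 : ((x:ℝ)/2)^(2*k) = x^(2*k) / 4^k := by
        rw [div_pow, pow_mul, pow_mul]; norm_num
      rw [show k + 0 = k from rfl, h1]
      have h2 : (Nat.factorial (2*k) : ℝ) ≠ 0 := Nat.cast_ne_zero.2 (Nat.factorial_ne_zero _)
      have h3 : (Nat.factorial k : ℝ) ≠ 0 := Nat.cast_ne_zero.2 (Nat.factorial_ne_zero _)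
      have h4 : (4:ℝ)^k ≠ 0 := by positivity
      field_simp
    simp only [heven, hodd, tsum_zero, add_zero, tsum_mul_left, besselI]
  · -- m = 1
    have heven : ∀ k : ℕ, ∫ θ in (0:ℝ)..π, F (2 * k) θ = 0 := by
      intro k
      rw [hval, cospi_odd, mul_zero]
    have hodd : ∀ k : ℕ, ∫ θ in (0:ℝ)..π, F (2 * k + 1) θ
        = π * ((x/2)^(2*k+1) / ((Nat.factorial k : ℝ) * (Nat.factorial (k+1) : ℝ))) := by
      intro k
      rw [hval, show 2 * k + 1 + 1 = 2 * (k + 1) from by ring, cospi_even]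
      have h1 : ((x:ℝ)/2)^(2*k+1) = x^(2*k+1) / (2 * 4^k) := by
        rw [div_pow]
        congr 1
        rw [pow_succ, pow_mul]; norm_num; ring
      rw [h1]
      have h2 : (Nat.factorial (2*(k+1)) : ℝ) = (2*k+2) * Nat.factorial (2*k+1) := by
        push_cast [show 2*(k+1) = (2*k+1)+1 from by ring, Nat.factorial_succ]
        ring
      have h2' : (Nat.factorial (2*k+1) : ℝ) ≠ 0 := Nat.cast_ne_zero.2 (Nat.factorial_ne_zero _)
      have h3 : (Nat.factorial (k+1) : ℝ) = (k+1) * Nat.factorial k := by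
        push_cast [Nat.factorial_succ]; ring
      have h3' : (Nat.factorial k : ℝ) ≠ 0 := Nat.cast_ne_zero.2 (Nat.factorial_ne_zero _)
      have h4 : (4:ℝ)^k ≠ 0 := by positivity
      rw [h2, h3]
      field_simp
      ring
    simp only [heven, hodd, tsum_zero, zero_add, tsum_mul_left, besselI]

end rep

-- inner expansion: for 0 ≤ c ≤ 1,
lemma inner_exp (α c : ℝ) (hc0 : 0 ≤ c) (hc1 : c ≤ 1) :
    ∫ u in (0:ℝ)..c, Real.exp (-(α*u)^2)
      = ∑' k : ℕ, (-α^2)^k / (Nat.factorial k) * (c^(2*k+1) / (2*(k:ℝ)+1)) := by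
  have hpt : ∀ u : ℝ, Real.exp (-(α*u)^2)
      = ∑' k : ℕ, (-α^2)^k / (Nat.factorial k) * u^(2*k) := by
    intro u
    rw [real_exp_tsum (-(α*u)^2)]
    congr 1
    ext k
    have : (-(α*u)^2) = (-α^2) * u^2 := by ring
    rw [this, mul_pow, ← pow_mul, mul_div_assoc, div_mul_eq_mul_div, mul_comm (2:ℕ) k]
    ring
  have hswap := tsum_intervalIntegral_swap hc0
    (fun k u => (-α^2)^k / (Nat.factorial k) * u^(2*k))
    (fun k => (α^2)^k / (Nat.factorial k))
    (fun k => continuous_const.mul (continuous_pow _))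
    (by
      intro k t ht
      rw [abs_mul, abs_div, abs_pow, abs_pow, abs_neg, abs_pow, Nat.abs_cast, sq_abs]
      have h1 : |t| ^ (2*k) ≤ 1 := pow_le_one₀ (abs_nonneg _)
        (abs_le.2 ⟨by linarith [ht.1], by linarith [ht.2]⟩)
      calc (α^2)^k / (Nat.factorial k) * |t|^(2*k)
          ≤ (α^2)^k / (Nat.factorial k) * 1 :=
            mul_le_mul_of_nonneg_left h1 (by positivity)
        _ = (α^2)^k / (Nat.factorial k) := mul_one _)
    (Real.summable_pow_div_factorial (α^2))
  rw [intervalIntegral.integral_congr (g := fun u => ∑' k : ℕ,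
      (-α^2)^k / (Nat.factorial k) * u^(2*k)) (fun u _ => hpt u), hswap]
  congr 1
  ext k
  rw [intervalIntegral.integral_const_mul, integral_pow]
  push_cast
  norm_num

lemma erf_eq (α : ℝ) (s : ℝ) (hs0 : 0 ≤ s) (hs1 : s ≤ 1) :
    erf (α * Real.sqrt (1 - s^2))
      = (2/Real.sqrt π) * α * ∑' k : ℕ,
        (-α^2)^k / ((Nat.factorial k) * (2*(k:ℝ)+1)) * ((1-s^2)^k * Real.sqrt (1-s^2)) := by
  have h1s : (0:ℝ) ≤ 1 - s^2 := by nlinarith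
  set c := Real.sqrt (1 - s^2) with hc
  have hc0 : 0 ≤ c := Real.sqrt_nonneg _
  have hc1 : c ≤ 1 := Real.sqrt_le_one.mpr (by nlinarith)
  have hcsq : c^2 = 1 - s^2 := Real.sq_sqrt h1s
  have hsub : ∫ t in (0:ℝ)..(α*c), Real.exp (-t^2)
      = α * ∫ u in (0:ℝ)..c, Real.exp (-(α*u)^2) := by
    have h := intervalIntegral.smul_integral_comp_mul_left (a := (0:ℝ)) (b := c)
      (fun t => Real.exp (-t^2)) α
    rw [mul_zero] at h
    rw [← h, smul_eq_mul]
  have hterm : ∀ k : ℕ, (-α^2)^k / (Nat.factorial k) * (c^(2*k+1) / (2*(k:ℝ)+1))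
      = (-α^2)^k / ((Nat.factorial k) * (2*(k:ℝ)+1)) * ((1-s^2)^k * c) := by
    intro k
    have hpow : c^(2*k+1) = (1-s^2)^k * c := by
      rw [pow_succ, pow_mul, hcsq]
    rw [hpow]
    have h2k : (2*(k:ℝ)+1) ≠ 0 := by positivity
    have hf : (Nat.factorial k : ℝ) ≠ 0 := Nat.cast_ne_zero.2 (Nat.factorial_ne_zero _)
    field_simp
    try ring
  rw [erf, hsub, inner_exp α c hc0 hc1, tsum_congr hterm]
  ring

lemma lhs_chain (α : ℝ) (hα : 0 < α) :
    (2/(α*Real.sqrt Real.pi)) * ∫ s in (0:ℝ)..1, erf (α * Real.sqrt (1 - s^2))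
      = (4/π) * ∑' k : ℕ, (-α^2)^k / ((Nat.factorial k) * (2*(k:ℝ)+1))
          * ∫ s in (0:ℝ)..1, (1-s^2)^k * Real.sqrt (1-s^2) := by
  have hrw : ∫ s in (0:ℝ)..1, erf (α * Real.sqrt (1 - s^2))
      = (2/Real.sqrt π) * α * ∑' k : ℕ, (-α^2)^k / ((Nat.factorial k) * (2*(k:ℝ)+1))
          * ∫ s in (0:ℝ)..1, (1-s^2)^k * Real.sqrt (1-s^2) := by
    have hcongr : ∀ s ∈ Set.uIcc (0:ℝ) 1, erf (α * Real.sqrt (1 - s^2))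
        = (2/Real.sqrt π) * α * ∑' k : ℕ,
          (-α^2)^k / ((Nat.factorial k) * (2*(k:ℝ)+1)) * ((1-s^2)^k * Real.sqrt (1-s^2)) := by
      intro s hs
      rw [Set.uIcc_of_le (by norm_num : (0:ℝ) ≤ 1)] at hs
      exact erf_eq α s hs.1 hs.2
    rw [intervalIntegral.integral_congr hcongr, intervalIntegral.integral_const_mul]
    congr 1
    have hswap := tsum_intervalIntegral_swap (by norm_num : (0:ℝ) ≤ 1)
      (fun k s => (-α^2)^k / ((Nat.factorial k) * (2*(k:ℝ)+1)) * ((1-s^2)^k * Real.sqrt (1-s^2)))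
      (fun k => (α^2)^k / (Nat.factorial k))
      (fun k => by fun_prop)
      (by
        intro k s hs
        show |(-α^2)^k / ((Nat.factorial k : ℝ) * (2*(k:ℝ)+1)) * ((1-s^2)^k * Real.sqrt (1-s^2))|
          ≤ (α^2)^k / (Nat.factorial k)
        have h1s : (0:ℝ) ≤ 1 - s^2 := by nlinarith [hs.1, hs.2]
        have h1s' : 1 - s^2 ≤ 1 := by nlinarith [hs.1]
        have hfpos : (0:ℝ) < (Nat.factorial k : ℝ) := Nat.cast_pos.2 (Nat.factorial_pos k)
        have habs : |(-α^2)^k / ((Nat.factorial k : ℝ) * (2*(k:ℝ)+1)) * ((1-s^2)^k * Real.sqrt (1-s^2))|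
            = (α^2)^k / ((Nat.factorial k : ℝ) * (2*(k:ℝ)+1)) * ((1-s^2)^k * Real.sqrt (1-s^2)) := by
          rw [abs_mul, abs_div, abs_pow, abs_neg,
            abs_of_nonneg (show (0:ℝ) ≤ (Nat.factorial k : ℝ) * (2*(k:ℝ)+1) by positivity),
            abs_of_nonneg (sq_nonneg α), abs_of_nonneg (show (0:ℝ) ≤ (1-s^2)^k * Real.sqrt (1-s^2) by positivity)]
        rw [habs]
        have hb1 : (1-s^2)^k ≤ 1 := pow_le_one₀ h1s h1s'
        have hb2 : Real.sqrt (1-s^2) ≤ 1 := Real.sqrt_le_one.mpr h1s'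
        calc (α^2)^k / ((Nat.factorial k : ℝ) * (2*(k:ℝ)+1)) * ((1-s^2)^k * Real.sqrt (1-s^2))
            ≤ (α^2)^k / ((Nat.factorial k : ℝ) * (2*(k:ℝ)+1)) * 1 := by
              apply mul_le_mul_of_nonneg_left _ (by positivity)
              calc (1-s^2)^k * Real.sqrt (1-s^2) ≤ 1 * 1 :=
                mul_le_mul hb1 hb2 (Real.sqrt_nonneg _) zero_le_one
              _ = 1 := mul_one 1
          _ ≤ (α^2)^k / (Nat.factorial k) := by
              rw [mul_one]
              apply div_le_div_of_nonneg_left (by positivity) hfpos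
              nlinarith [hfpos]
        )
      (Real.summable_pow_div_factorial (α^2))
    rw [hswap]
    congr 1
    ext k
    rw [intervalIntegral.integral_const_mul]
  rw [hrw]
  have hπ : Real.sqrt π ≠ 0 := ne_of_gt (Real.sqrt_pos.2 Real.pi_pos)
  have hsq : Real.sqrt π * Real.sqrt π = π := Real.mul_self_sqrt Real.pi_pos.le
  have hconst : (2/(α*Real.sqrt π)) * ((2/Real.sqrt π)*α) = 4/π := by
    field_simp
    linear_combination (-4) * hsq
  calc (2/(α*Real.sqrt Real.pi)) * ((2/Real.sqrt π)*α * ∑' k : ℕ,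
        (-α^2)^k / ((Nat.factorial k) * (2*(k:ℝ)+1))
          * ∫ s in (0:ℝ)..1, (1-s^2)^k * Real.sqrt (1-s^2))
      = ((2/(α*Real.sqrt π)) * ((2/Real.sqrt π)*α)) * ∑' k : ℕ,
        (-α^2)^k / ((Nat.factorial k) * (2*(k:ℝ)+1))
          * ∫ s in (0:ℝ)..1, (1-s^2)^k * Real.sqrt (1-s^2) := by ring
    _ = _ := by rw [hconst]

lemma rhs_chain (α : ℝ) :
    Real.exp (-α^2/2) * (besselI 0 (α^2/2) + besselI 1 (α^2/2))
      = (4/π) * ∑' k : ℕ, (-α^2)^k / (Nat.factorial k)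
          * ∫ φ in (0:ℝ)..(π/2), sin φ^(2*k) * cos φ^2 := by
  set x : ℝ := α^2/2 with hx
  have hπ : (π:ℝ) ≠ 0 := Real.pi_ne_zero
  have hcont : Continuous (fun θ : ℝ => Real.exp (x * cos θ)) := by fun_prop
  -- step 1: sum of the two Bessel reps
  have hadd : ∫ θ in (0:ℝ)..π, (1 + cos θ) * Real.exp (x * cos θ)
      = π * besselI 0 x + π * besselI 1 x := by
    have hi0 : IntervalIntegrable (fun θ => cos θ^0 * Real.exp (x*cos θ)) volume 0 π :=
      ((Real.continuous_cos.pow 0).mul hcont).intervalIntegrable 0 π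
    have hi1 : IntervalIntegrable (fun θ => cos θ^1 * Real.exp (x*cos θ)) volume 0 π :=
      ((Real.continuous_cos.pow 1).mul hcont).intervalIntegrable 0 π
    rw [← besselI_rep x 0 (by norm_num), ← besselI_rep x 1 le_rfl,
      ← intervalIntegral.integral_add hi0 hi1]
    apply intervalIntegral.integral_congr
    intro θ _
    simp only [pow_zero, pow_one]
    ring
  -- step 2: θ = 2φ substitution
  have hsub : ∫ θ in (0:ℝ)..π, Real.exp (-x) * ((1 + cos θ) * Real.exp (x * cos θ))
      = 2 * ∫ φ in (0:ℝ)..(π/2),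
          Real.exp (-x) * ((1 + cos (2*φ)) * Real.exp (x * cos (2*φ))) := by
    have h := intervalIntegral.smul_integral_comp_mul_left (a := (0:ℝ)) (b := π/2)
      (fun θ => Real.exp (-x) * ((1 + cos θ) * Real.exp (x * cos θ))) 2
    rw [mul_zero, show (2:ℝ)*(π/2) = π from by ring] at h
    rw [← h, smul_eq_mul]
  -- step 3: pointwise trig identity
  have hpt : ∀ φ : ℝ, Real.exp (-x) * ((1 + cos (2*φ)) * Real.exp (x * cos (2*φ)))
      = 2 * (cos φ^2 * Real.exp (-α^2 * sin φ^2)) := by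
    intro φ
    have hc2 : Real.cos (2*φ) = 2 * cos φ^2 - 1 := Real.cos_two_mul φ
    have hs2 : Real.sin φ^2 = 1 - cos φ^2 := Real.sin_sq φ
    have key : Real.exp (-x) * Real.exp (x*(2*cos φ^2-1))
        = Real.exp (-α^2*(1-cos φ^2)) := by
      rw [← Real.exp_add]
      congr 1
      rw [hx]; ring
    rw [hc2, hs2]
    calc Real.exp (-x) * ((1 + (2*cos φ^2 - 1)) * Real.exp (x*(2*cos φ^2-1)))
        = 2*cos φ^2 * (Real.exp (-x) * Real.exp (x*(2*cos φ^2-1))) := by ring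
      _ = 2*cos φ^2 * Real.exp (-α^2*(1-cos φ^2)) := by rw [key]
      _ = 2 * (cos φ^2 * Real.exp (-α^2*(1-cos φ^2))) := by ring
  -- step 4 : series expansion of the φ integral
  have hser : ∫ φ in (0:ℝ)..(π/2), cos φ^2 * Real.exp (-α^2 * sin φ^2)
      = ∑' k : ℕ, (-α^2)^k / (Nat.factorial k)
          * ∫ φ in (0:ℝ)..(π/2), sin φ^(2*k) * cos φ^2 := by
    have hptk : ∀ φ : ℝ, cos φ^2 * Real.exp (-α^2 * sin φ^2)
        = ∑' k : ℕ, (-α^2)^k / (Nat.factorial k) * (sin φ^(2*k) * cos φ^2) := by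
      intro φ
      rw [real_exp_tsum (-α^2 * sin φ^2), ← tsum_mul_left]
      congr 1
      ext k
      rw [mul_pow, ← pow_mul, mul_comm (2:ℕ) k]
      ring
    have hbd : ∀ k : ℕ, ∀ t ∈ Set.Icc (0:ℝ) (π/2),
        |(-α^2)^k / (Nat.factorial k : ℝ) * (sin t^(2*k) * cos t^2)|
          ≤ (α^2)^k / (Nat.factorial k) := by
      intro k t _
      have hb : |Real.sin t^(2*k) * Real.cos t^2| ≤ 1 := by
        rw [abs_mul, abs_pow, abs_pow]
        have h1 : |Real.sin t|^(2*k) ≤ 1 :=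
          pow_le_one₀ (abs_nonneg _) (Real.abs_sin_le_one t)
        have h2 : |Real.cos t|^2 ≤ 1 :=
          pow_le_one₀ (abs_nonneg _) (Real.abs_cos_le_one t)
        nlinarith [pow_nonneg (abs_nonneg (Real.sin t)) (2*k),
          pow_nonneg (abs_nonneg (Real.cos t)) 2]
      calc |(-α^2)^k / (Nat.factorial k : ℝ) * (sin t^(2*k) * cos t^2)|
          = (α^2)^k / (Nat.factorial k : ℝ) * |sin t^(2*k) * cos t^2| := by
            rw [abs_mul, abs_div, abs_pow, abs_neg, abs_of_nonneg (sq_nonneg α), Nat.abs_cast]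
        _ ≤ (α^2)^k / (Nat.factorial k : ℝ) * 1 :=
            mul_le_mul_of_nonneg_left hb (by positivity)
        _ = (α^2)^k / (Nat.factorial k) := mul_one _
    have hswap := tsum_intervalIntegral_swap (by positivity : (0:ℝ) ≤ π/2)
      (fun k φ => (-α^2)^k / (Nat.factorial k) * (sin φ^(2*k) * cos φ^2))
      (fun k => (α^2)^k / (Nat.factorial k))
      (fun k => by fun_prop) hbd (Real.summable_pow_div_factorial (α^2))
    rw [intervalIntegral.integral_congr (fun φ _ => hptk φ), hswap]
    apply tsum_congr
    intro k
    rw [intervalIntegral.integral_const_mul]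
  -- assemble
  have e1 : Real.exp (-α^2/2) * (besselI 0 x + besselI 1 x)
      = (1/π) * ∫ θ in (0:ℝ)..π, Real.exp (-x) * ((1 + cos θ) * Real.exp (x * cos θ)) := by
    rw [intervalIntegral.integral_const_mul, hadd, show -α^2/2 = -x from by rw [hx]; ring]
    field_simp
  rw [e1, hsub]
  rw [intervalIntegral.integral_congr (fun φ _ => hpt φ),
    intervalIntegral.integral_const_mul, hser]
  ring

/-- Lemma: the two expressions for c(α) coincide:
(2/(α√π)) ∫₀¹ erf(α√(1-s²)) ds = e^{-α²/2}(I₀(α²/2)+I₁(α²/2)). -/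
theorem c_alpha_integral_eq_bessel (α : ℝ) (hα : 0 < α) :
    (2/(α*Real.sqrt Real.pi)) * ∫ s in (0:ℝ)..1, erf (α * Real.sqrt (1 - s^2))
      = Real.exp (-α^2/2) * (besselI 0 (α^2/2) + besselI 1 (α^2/2)) := by
  rw [lhs_chain α hα, rhs_chain α]
  congr 1
  apply tsum_congr
  intro k
  rw [key_identity k]
  have h2k : (2*(k:ℝ)+1) ≠ 0 := by positivity
  have hf : (Nat.factorial k : ℝ) ≠ 0 := Nat.cast_ne_zero.2 (Nat.factorial_ne_zero _)
  field_simp
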